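/- arXiv:math/0608632 — 2 statements merged into one kernel-verified Lean document; each statement's English description precedes it below -/
import Mathlib

section
/- Let I ⊆ k[x₁,...,xₙ] be an ideal generated by homogeneous polynomials all of the same degree d ≥ 2, let m ≥ d, and let f be one of the homogeneous generators. For elements a₁,...,aₙ of k[t]/(t^{m+1}) each divisible by t, writing aᵢ = t·bᵢ, one has f(a₁,...,aₙ) = 0 in k[t]/(t^{m+1}) if and only if f(b₁,...,bₙ) lies in the ideal (t^{m+1-d}) of k[t]/(t^{m+1}). -/
/-!
Substituting `a = t • b` into a form of degree `d` pulls out `t ^ d`, so `f(a) = 0` says that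
`t ^ d * f(b)` vanishes modulo `t ^ (m + 1)`; since `t` is a nonzerodivisor of `k[t]`, lifting
to `k[t]` and cancelling `t ^ d` turns this into `t ^ (m + 1 - d) ∣ f(b)`.
-/

open Polynomial

theorem pow_dvd_pow_mul_iff_pow_sub_dvd {M : Type*} [CommMonoidWithZero M] [IsCancelMulZero M]
    {a : M} (ha : a ≠ 0) (N d : ℕ) (p : M) : a ^ N ∣ a ^ d * p ↔ a ^ (N - d) ∣ p := by
  rcases le_total d N with hdN | hNd
  · rw [← pow_mul_pow_sub a hdN, mul_dvd_mul_iff_left (pow_ne_zero d ha)]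
  · simpa [Nat.sub_eq_zero_of_le hNd] using dvd_mul_of_dvd_left (pow_dvd_pow a hNd) p

theorem Ideal.Quotient.mk_pow_mul_eq_zero_iff {R : Type*} [CommRing R] [IsDomain R] {a : R}
    (ha : a ≠ 0) (N d : ℕ) (y : R ⧸ Ideal.span {a ^ N}) :
    Ideal.Quotient.mk _ a ^ d * y = 0 ↔
      y ∈ Ideal.span {Ideal.Quotient.mk (Ideal.span {a ^ N}) (a ^ (N - d))} := by
  obtain ⟨p, rfl⟩ := Ideal.Quotient.mk_surjective y
  have hle : Ideal.span {a ^ N} ≤ Ideal.span {a ^ (N - d)} :=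
    Ideal.span_singleton_le_span_singleton.mpr (pow_dvd_pow a (N.sub_le d))
  rw [← map_pow, ← map_mul, Ideal.Quotient.eq_zero_iff_mem, Ideal.mem_span_singleton,
    pow_dvd_pow_mul_iff_pow_sub_dvd ha, ← Ideal.mem_span_singleton,
    ← Ideal.mem_quotient_iff_mem hle, Ideal.map_span, Set.image_singleton]

theorem MvPolynomial.IsHomogeneous.aeval_smul {σ R S : Type*} [CommSemiring R] [CommSemiring S]
    [Algebra R S] {φ : MvPolynomial σ R} {n : ℕ} (hφ : φ.IsHomogeneous n) (c : S) (b : σ → S) :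
    MvPolynomial.aeval (c • b) φ = c ^ n * MvPolynomial.aeval b φ := by
  simp only [MvPolynomial.aeval_def, MvPolynomial.eval₂_eq, Finset.mul_sum]
  refine Finset.sum_congr rfl fun x hx => ?_
  have hdeg : ∑ i ∈ x.support, x i = n := by
    simpa [Finsupp.weight_apply, Finsupp.sum] using hφ (MvPolynomial.mem_support_iff.mp hx)
  simp only [Pi.smul_apply, smul_eq_mul, mul_pow, Finset.prod_mul_distrib,
    Finset.prod_pow_eq_pow_sum, hdeg]
  ring

theorem homogeneous_jet_substitution_general (k : Type*) [Field k] (n d m : ℕ)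
    (f : MvPolynomial (Fin n) k) (hf : f.IsHomogeneous d)
    (a b : Fin n →
      Polynomial k ⧸ (Ideal.span {Polynomial.X ^ (m + 1)} : Ideal (Polynomial k)))
    (hab : ∀ i, a i = Ideal.Quotient.mk _ Polynomial.X * b i) :
    MvPolynomial.aeval a f = 0 ↔
      MvPolynomial.aeval b f ∈
        Ideal.span {Ideal.Quotient.mk (Ideal.span {Polynomial.X ^ (m + 1)})
          (Polynomial.X ^ (m + 1 - d))} := by
  have ha : a = Ideal.Quotient.mk (Ideal.span {X ^ (m + 1)}) (X : k[X]) • b := by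
    ext i
    rw [hab, Pi.smul_apply, smul_eq_mul]
  rw [ha, hf.aeval_smul, Ideal.Quotient.mk_pow_mul_eq_zero_iff X_ne_zero]

theorem homogeneous_jet_substitution (k : Type*) [Field k] (n d m : ℕ)
    (hd : 2 ≤ d) (hm : d ≤ m)
    (f : MvPolynomial (Fin n) k) (hf : f.IsHomogeneous d)
    (a b : Fin n →
      Polynomial k ⧸ (Ideal.span {Polynomial.X ^ (m + 1)} : Ideal (Polynomial k)))
    (hab : ∀ i, a i = Ideal.Quotient.mk _ Polynomial.X * b i) :
    MvPolynomial.aeval a f = 0 ↔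
      MvPolynomial.aeval b f ∈
        Ideal.span {Ideal.Quotient.mk (Ideal.span {Polynomial.X ^ (m + 1)})
          (Polynomial.X ^ (m + 1 - d))} :=
  homogeneous_jet_substitution_general k n d m f hf a b hab
end

section
/- Let Δ be a (c+1)×(c+1) minor of the generic r×s matrix (x_{ij}), and let φ send x_{ij} to x_{ij}^{(0)} + x_{ij}^{(1)}t + x_{ij}^{(2)}t², computed modulo t³. Then each of the coefficients of t⁰, t¹, t² in φ(Δ) lies in the ideal generated by all products of c-1 distinct variables of the form x_{ij}^{(0)}; equivalently, every monomial appearing in these coefficients contains at least c-1 factors from {x_{ij}^{(0)}}. -/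
/-!
Each term of the expanded determinant is a product of `c + 1` factors
`x⁽⁰⁾ + x⁽¹⁾ t + x⁽²⁾ t²`, one from each column. A coefficient of `t ^ d` takes a non-constant
term from at most `d` of the factors, so for `d ≤ 2` at least `c - 1` factors contribute their
constant term `x⁽⁰⁾`, and these lie in distinct columns, hence are distinct variables.
-/

open Polynomial Finset

namespace Polynomial

variable {R ι : Type*} [CommRing R]

theorem coeff_prod_eq_sum_finsuppAntidiag [DecidableEq ι] (f : ι → R[X]) (s : Finset ι)
    (d : ℕ) :
    (∏ i ∈ s, f i).coeff d = ∑ l ∈ finsuppAntidiag s d, ∏ i ∈ s, (f i).coeff (l i) := by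
  simpa only [← coeff_coe, ← coeToPowerSeries.ringHom_apply, map_prod] using
    PowerSeries.coeff_prod (fun i ↦ (f i : PowerSeries R)) d s

theorem coeff_prod_mem_span_prod_coeff_zero (f : ι → R[X]) (s : Finset ι) {n d : ℕ}
    (h : n + d ≤ #s) :
    (∏ i ∈ s, f i).coeff d ∈
      Ideal.span {g | ∃ S ⊆ s, #S = n ∧ g = ∏ i ∈ S, (f i).coeff 0} := by
  classical
  rw [coeff_prod_eq_sum_finsuppAntidiag]
  refine Ideal.sum_mem _ fun l hl ↦ ?_
  obtain ⟨hsum, hsupp⟩ := mem_finsuppAntidiag.1 hl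
  have hcard : #l.support ≤ d := by
    calc #l.support = ∑ i ∈ l.support, 1 := card_eq_sum_ones _
      _ ≤ ∑ i ∈ l.support, l i :=
        sum_le_sum fun i hi ↦ Nat.one_le_iff_ne_zero.2 (Finsupp.mem_support_iff.1 hi)
      _ = ∑ i ∈ s, l i := sum_subset hsupp fun i _ hi ↦ Finsupp.notMem_support_iff.1 hi
      _ = d := hsum
  obtain ⟨S, hS, rfl⟩ := exists_subset_card_eq (s := s \ l.support) (n := n)
    (by rw [card_sdiff_of_subset hsupp]; omega)
  have hSs : S ⊆ s := hS.trans sdiff_subset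
  rw [← prod_sdiff hSs]
  refine Ideal.mul_mem_left _ _
    (Ideal.subset_span ⟨S, hSs, rfl, prod_congr rfl fun i hi ↦ ?_⟩)
  rw [Finsupp.notMem_support_iff.1 (mem_sdiff.1 (hS hi)).2]

end Polynomial

theorem Matrix.coeff_det_mem_span_prod_coeff_zero {R n : Type*} [CommRing R] [Fintype n]
    [DecidableEq n] (M : Matrix n n R[X]) {m d : ℕ} (h : m + d ≤ Fintype.card n) :
    M.det.coeff d ∈ Ideal.span {g | ∃ (π : Equiv.Perm n) (S : Finset n), #S = m ∧
      g = ∏ i ∈ S, (M (π i) i).coeff 0} := by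
  rw [det_apply, finsetSum_coeff]
  refine Ideal.sum_mem _ fun π _ ↦ ?_
  rw [coeff_smul, Units.smul_def]
  refine zsmul_mem (Ideal.span_mono ?_ (coeff_prod_mem_span_prod_coeff_zero _ _ h)) _
  rintro _ ⟨S, -, hS, rfl⟩
  exact ⟨π, S, hS, rfl⟩

theorem minor_second_jet_coeffs_general (k : Type) [Field k] (r s c : ℕ) (hc : 2 ≤ c)
    (ρ : Fin (c + 1) → Fin r) (σ : Fin (c + 1) → Fin s)
    (hσ : Function.Injective σ) :
    let φ : MvPolynomial (Fin r × Fin s) k →ₐ[k]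
        Polynomial (MvPolynomial (Fin 3 × Fin r × Fin s) k) :=
      MvPolynomial.aeval fun p =>
        Polynomial.C (MvPolynomial.X ((0 : Fin 3), p.1, p.2)) +
          Polynomial.C (MvPolynomial.X ((1 : Fin 3), p.1, p.2)) * Polynomial.X +
          Polynomial.C (MvPolynomial.X ((2 : Fin 3), p.1, p.2)) * Polynomial.X ^ 2
    let Δ : MvPolynomial (Fin r × Fin s) k :=
      Matrix.det (Matrix.of fun a b : Fin (c + 1) => MvPolynomial.X (ρ a, σ b))
    let I : Ideal (MvPolynomial (Fin 3 × Fin r × Fin s) k) :=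
      Ideal.span {g | ∃ T : Finset (Fin r × Fin s), T.card = c - 1 ∧
        g = ∏ p ∈ T, MvPolynomial.X ((0 : Fin 3), p.1, p.2)}
    (φ Δ).coeff 0 ∈ I ∧ (φ Δ).coeff 1 ∈ I ∧ (φ Δ).coeff 2 ∈ I := by
  intro φ Δ I
  have hI : ∀ m ≤ 2, (φ Δ).coeff m ∈ I := fun m hm ↦ by
    rw [show φ Δ = _ from AlgHom.map_det φ _]
    refine Ideal.span_le.2 ?_ (Matrix.coeff_det_mem_span_prod_coeff_zero _ (m := c - 1)
      (by rw [Fintype.card_fin]; omega))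
    rintro _ ⟨π, S, hS, rfl⟩
    have hinj : Function.Injective fun i ↦ (ρ (π i), σ i) :=
      fun i j hij ↦ hσ (congrArg Prod.snd hij)
    refine Ideal.subset_span
      ⟨S.image fun i ↦ (ρ (π i), σ i), by rw [card_image_of_injective _ hinj, hS], ?_⟩
    rw [prod_image hinj.injOn]
    simp [φ]
  exact ⟨hI 0 (by omega), hI 1 (by omega), hI 2 le_rfl⟩

theorem minor_second_jet_coeffs (k : Type) [Field k] (r s c : ℕ) (hc : 2 ≤ c)
    (ρ : Fin (c + 1) → Fin r) (σ : Fin (c + 1) → Fin s)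
    (hρ : Function.Injective ρ) (hσ : Function.Injective σ) :
    let φ : MvPolynomial (Fin r × Fin s) k →ₐ[k]
        Polynomial (MvPolynomial (Fin 3 × Fin r × Fin s) k) :=
      MvPolynomial.aeval fun p =>
        Polynomial.C (MvPolynomial.X ((0 : Fin 3), p.1, p.2)) +
          Polynomial.C (MvPolynomial.X ((1 : Fin 3), p.1, p.2)) * Polynomial.X +
          Polynomial.C (MvPolynomial.X ((2 : Fin 3), p.1, p.2)) * Polynomial.X ^ 2
    let Δ : MvPolynomial (Fin r × Fin s) k :=
      Matrix.det (Matrix.of fun a b : Fin (c + 1) => MvPolynomial.X (ρ a, σ b))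
    let I : Ideal (MvPolynomial (Fin 3 × Fin r × Fin s) k) :=
      Ideal.span {g | ∃ T : Finset (Fin r × Fin s), T.card = c - 1 ∧
        g = ∏ p ∈ T, MvPolynomial.X ((0 : Fin 3), p.1, p.2)}
    (φ Δ).coeff 0 ∈ I ∧ (φ Δ).coeff 1 ∈ I ∧ (φ Δ).coeff 2 ∈ I :=
  minor_second_jet_coeffs_general k r s c hc ρ σ hσ
end
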